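/- Let p be an odd prime, r = p^m with m even and m ≡ 0 (mod p). For A ∈ F_p^* and B ∈ F_p, let N(A,B) = #{x ∈ F_r : Tr(x²) = A, Tr(x) = B}. Then N(A,0) = p^{m-2} - p^{-1}G_m and N(A,B) = p^{m-2} for B ≠ 0, where G_m is the quadratic Gauss sum over F_r. -/

import Mathlib

/-!
Write `ψ = e ∘ Tr` for a nontrivial additive character `e` of `F_p`. Detecting the conditions
`Tr(x²) = A` and `Tr x = B` with the characters of `F_p` expresses `p² N(A,B)` through the sums
`∑ₓ ψ(a x² + b x)` with `a, b ∈ F_p`. For `a = 0` such a sum is `p^m` or `0`. For `a ≠ 0`,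
completing the square leaves the constant `-b²/4a ∈ F_p`, whose trace is `m • (-b²/4a) = 0`
since `p ∣ m`, and `a` is a square in `F_r` since `m` is even; so the sum is the Gauss sum `G_m`.
What remains are the complete character sums `∑_{a ≠ 0} e(-aA) = -1` and
`∑_b e(-bB) = p·[B = 0]`.
-/

open Finset

theorem Nat.sub_one_dvd_pow_div_two {q n : ℕ} (hq : Odd q) (hn : Even n) :
    q - 1 ∣ q ^ n / 2 := by
  obtain ⟨k, rfl⟩ := hn
  obtain ⟨j, rfl⟩ := hq
  obtain ⟨c, hc⟩ : (2 * j + 1) ^ 2 - 1 ∣ ((2 * j + 1) ^ 2) ^ k - 1 := by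
    simpa only [one_pow] using Nat.sub_dvd_pow_sub_pow ((2 * j + 1) ^ 2) 1 k
  refine ⟨(j + 1) * c, ?_⟩
  have hsq : (2 * j + 1) ^ 2 - 1 = 2 * (2 * j * (j + 1)) := by
    rw [Nat.sub_eq_iff_eq_add (Nat.one_le_pow _ _ (by omega))]; ring
  rw [hsq, show 2 * (2 * j * (j + 1)) * c = 2 * (2 * j * ((j + 1) * c)) by ring] at hc
  rw [← two_mul, pow_mul, Nat.add_sub_cancel]
  omega

theorem FiniteField.isSquare_algebraMap_of_even_finrank {K L : Type*} [Field K] [Fintype K]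
    [Field L] [Fintype L] [Algebra K L] (hK : ringChar K ≠ 2)
    (heven : Even (Module.finrank K L)) (a : K) : IsSquare (algebraMap K L a) := by
  rcases eq_or_ne a 0 with rfl | ha
  · exact ⟨0, by simp⟩
  have hL : ringChar L ≠ 2 := Algebra.ringChar_eq K L ▸ hK
  rw [isSquare_iff hL ((map_ne_zero _).mpr ha), Module.card_eq_pow_finrank (K := K)]
  obtain ⟨t, ht⟩ :=
    Nat.sub_one_dvd_pow_div_two (Nat.odd_iff.mpr (odd_card_of_char_ne_two hK)) heven
  rw [ht, pow_mul, ← map_pow, pow_card_sub_one_eq_one a ha, map_one, one_pow]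

theorem Algebra.trace_algebraMap_eq_zero_of_ringChar_dvd {K L : Type*} [Field K] [CommRing L]
    [Nontrivial L] [Algebra K L] [Module.Finite K L] (hdvd : ringChar K ∣ Module.finrank K L)
    (a : K) : Algebra.trace K L (algebraMap K L a) = 0 := by
  rw [Algebra.trace_algebraMap, nsmul_eq_mul, (ringChar.spec K _).mpr hdvd, zero_mul]

namespace AddChar

section FiniteField

variable {F R : Type*} [Field F] [Fintype F] [CommRing R]

theorem sum_mul_sq_of_isSquare (ψ : AddChar F R) {u : F} (hu : u ≠ 0) (hsq : IsSquare u) :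
    ∑ x, ψ (u * x ^ 2) = ∑ x, ψ (x ^ 2) := by
  obtain ⟨s, rfl⟩ := hsq
  have hs : s ≠ 0 := by rintro rfl; simp at hu
  calc ∑ x, ψ (s * s * x ^ 2) = ∑ x, ψ ((s * x) ^ 2) := by simp_rw [mul_pow, sq s]
    _ = ∑ x, ψ (x ^ 2) := Fintype.sum_bijective _ (mulLeft_bijective₀ s hs) _ _ fun _ ↦ rfl

theorem sum_mul_sq_add_mul (hF : ringChar F ≠ 2) (ψ : AddChar F R) {a : F} (ha : a ≠ 0)
    (b : F) : ∑ x, ψ (a * x ^ 2 + b * x) = ψ (-b ^ 2 / (4 * a)) * ∑ x, ψ (a * x ^ 2) := by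
  have h2 : (2 : F) ≠ 0 := Ring.two_ne_zero hF
  have h4 : (4 : F) ≠ 0 := by simpa [show (4 : F) = 2 ^ 2 by norm_num] using h2
  have hsquare (x : F) : a * (x - b / (2 * a)) ^ 2 + b * (x - b / (2 * a)) =
      a * x ^ 2 + -b ^ 2 / (4 * a) := by
    field_simp; ring
  rw [mul_sum, ← (Equiv.subRight (b / (2 * a))).sum_comp]
  refine sum_congr rfl fun x _ ↦ ?_
  rw [Equiv.subRight_apply, hsquare, map_add_eq_mul, mul_comm]

theorem sum_sq_eq_gaussSum [IsDomain R] [DecidableEq F] (hF : ringChar F ≠ 2)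
    {ψ : AddChar F R} (hψ : ψ ≠ 1) :
    ∑ x, ψ (x ^ 2) = gaussSum ((quadraticChar F).ringHomComp (Int.castRingHom R)) ψ := by
  have hfiber (z : F) : (#{y : F | y ^ 2 = z} : R) = 1 + quadraticChar F z := by
    have := quadraticChar_card_sqrts hF z
    simp only [Set.toFinset_ofPred] at this
    rw [add_comm]; exact_mod_cast congrArg (Int.cast : ℤ → R) this
  rw [← sum_fiberwise univ (fun y ↦ y ^ 2)]
  simp_rw [gaussSum, MulChar.ringHomComp_apply]
  calc ∑ z, ∑ y ∈ {y : F | y ^ 2 = z}, ψ (y ^ 2)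
      = ∑ z, (1 + quadraticChar F z : R) * ψ z := by
        refine sum_congr rfl fun z _ ↦ ?_
        rw [sum_congr rfl fun y hy ↦ by rw [(mem_filter.mp hy).2], sum_const, nsmul_eq_mul,
          hfiber]
    _ = _ := by simp [add_mul, sum_add_distrib, sum_eq_zero_of_ne_one hψ]

end FiniteField

section Trace

variable {K R : Type*} [Field K] [CommRing R] (L : Type*) [Field L] [Algebra K L]

noncomputable def compTrace (e : AddChar K R) : AddChar L R :=
  e.compAddMonoidHom (Algebra.trace K L).toAddMonoidHom

@[simp]
theorem compTrace_apply (e : AddChar K R) (x : L) : e.compTrace L x = e (Algebra.trace K L x) :=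
  rfl

variable {L}

theorem compTrace_ne_one [FiniteDimensional K L] [Algebra.IsSeparable K L] {e : AddChar K R}
    (he : e ≠ 1) : e.compTrace L ≠ 1 := by
  obtain ⟨c, hc⟩ := ne_one_iff.mp he
  obtain ⟨x, rfl⟩ := Algebra.trace_surjective K L c
  exact ne_one_iff.mpr ⟨x, hc⟩

theorem compTrace_algebraMap_mul (e : AddChar K R) (a : K) (x : L) :
    e.compTrace L (algebraMap K L a * x) = e (a * Algebra.trace K L x) := by
  rw [compTrace_apply, ← Algebra.smul_def, map_smul, smul_eq_mul]

end Trace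

section TraceCount

variable {K L R : Type*} [Field K] [Fintype K] [DecidableEq K] [Field L] [Fintype L]
  [Algebra K L] [CommRing R] [IsDomain R]

theorem sum_compTrace_mul_sq_add_mul [DecidableEq L] (hK : ringChar K ≠ 2)
    (hdvd : ringChar K ∣ Module.finrank K L) (heven : Even (Module.finrank K L))
    {e : AddChar K R} (he : e ≠ 1) (a b : K) :
    ∑ x : L, e.compTrace L (algebraMap K L a * x ^ 2 + algebraMap K L b * x) =
      if a = 0 then (if b = 0 then (Fintype.card L : R) else 0)
      else gaussSum ((quadraticChar L).ringHomComp (Int.castRingHom R)) (e.compTrace L) := by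
  have hψ : e.compTrace L ≠ 1 := compTrace_ne_one he
  by_cases ha : a = 0
  · simp_rw [if_pos ha, ha, map_zero, zero_mul, zero_add, mul_comm (algebraMap K L b)]
    rw [sum_mulShift _ (IsPrimitive.of_ne_one hψ)]
    simp
  rw [if_neg ha]
  have hL : ringChar L ≠ 2 := Algebra.ringChar_eq K L ▸ hK
  have ha' : algebraMap K L a ≠ 0 := (map_ne_zero _).mpr ha
  have hconst : -algebraMap K L b ^ 2 / (4 * algebraMap K L a) =
      algebraMap K L (-b ^ 2 / (4 * a)) := by simp [map_ofNat]
  rw [sum_mul_sq_add_mul hL _ ha', hconst, compTrace_apply,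
    Algebra.trace_algebraMap_eq_zero_of_ringChar_dvd hdvd, map_zero_eq_one, one_mul,
    sum_mul_sq_of_isSquare _ ha' (FiniteField.isSquare_algebraMap_of_even_finrank hK heven a),
    sum_sq_eq_gaussSum hL hψ]

theorem card_sq_mul_card_filter_trace_eq_sum {e : AddChar K R} (he : e ≠ 1) (A B : K) :
    (Fintype.card K : R) ^ 2 *
        #{x : L | Algebra.trace K L (x ^ 2) = A ∧ Algebra.trace K L x = B} =
      ∑ a, ∑ b, e (a * -A) * e (b * -B) *
        ∑ x : L, e.compTrace L (algebraMap K L a * x ^ 2 + algebraMap K L b * x) := by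
  have hdelta (c C : K) :
      ∑ a, e (a * (c - C)) = if c = C then (Fintype.card K : R) else 0 := by
    simp [sum_mulShift _ (IsPrimitive.of_ne_one he), sub_eq_zero]
  have hexpand (x : L) (a b : K) : e (a * (Algebra.trace K L (x ^ 2) - A)) *
      e (b * (Algebra.trace K L x - B)) = e (a * -A) * e (b * -B) *
        e.compTrace L (algebraMap K L a * x ^ 2 + algebraMap K L b * x) := by
    rw [map_add_eq_mul, compTrace_algebraMap_mul, compTrace_algebraMap_mul, sub_eq_add_neg,
      sub_eq_add_neg, mul_add, mul_add, map_add_eq_mul, map_add_eq_mul]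
    ring
  calc (Fintype.card K : R) ^ 2 *
        #{x : L | Algebra.trace K L (x ^ 2) = A ∧ Algebra.trace K L x = B}
      = ∑ x : L, (∑ a, e (a * (Algebra.trace K L (x ^ 2) - A))) *
          ∑ b, e (b * (Algebra.trace K L x - B)) := by
        simp_rw [hdelta, card_filter, Nat.cast_sum, mul_sum]
        refine sum_congr rfl fun x _ ↦ ?_
        split_ifs <;> simp_all [sq]
    _ = _ := by
        simp_rw [sum_mul_sum, hexpand, mul_sum]
        rw [sum_comm]
        exact sum_congr rfl fun a _ ↦ sum_comm

theorem card_sq_mul_card_filter_trace_eq [DecidableEq L] (hK : ringChar K ≠ 2)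
    (hdvd : ringChar K ∣ Module.finrank K L) (heven : Even (Module.finrank K L))
    {e : AddChar K R} (he : e ≠ 1) {A : K} (hA : A ≠ 0) (B : K) :
    (Fintype.card K : R) ^ 2 *
        #{x : L | Algebra.trace K L (x ^ 2) = A ∧ Algebra.trace K L x = B} =
      Fintype.card L - (if B = 0 then (Fintype.card K : R) else 0) *
        gaussSum ((quadraticChar L).ringHomComp (Int.castRingHom R)) (e.compTrace L) := by
  set G := gaussSum ((quadraticChar L).ringHomComp (Int.castRingHom R)) (e.compTrace L)
  have horth (C : K) : ∑ a, e (a * C) = if C = 0 then (Fintype.card K : R) else 0 := by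
    simp [sum_mulShift _ (IsPrimitive.of_ne_one he)]
  have hsum_ne_zero : ∑ a ∈ univ.erase 0, e (a * -A) = -1 := by
    rw [← add_right_inj (e (0 * -A)), add_sum_erase univ (fun a ↦ e (a * -A)) (mem_univ 0),
      horth, if_neg (neg_ne_zero.mpr hA)]
    simp
  have hzero : ∑ b, e (0 * -A) * e (b * -B) *
      (if b = 0 then (Fintype.card L : R) else 0) = Fintype.card L := by
    simp
  have hne_zero (a : K) : ∑ b, e (a * -A) * e (b * -B) * G =
      e (a * -A) * ((if B = 0 then (Fintype.card K : R) else 0) * G) := by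
    rw [← sum_mul, ← mul_sum, horth]
    simp only [neg_eq_zero, mul_assoc]
  rw [card_sq_mul_card_filter_trace_eq_sum he, ← add_sum_erase _ _ (mem_univ (0 : K))]
  simp_rw [sum_compTrace_mul_sq_add_mul hK hdvd heven he, if_pos, hzero]
  rw [sum_congr rfl fun a ha ↦ by simp_rw [if_neg (ne_of_mem_erase ha)]; exact hne_zero a,
    ← sum_mul, hsum_ne_zero]
  ring

end TraceCount

end AddChar

open AddChar in
/-- For `m` even with `p ∣ m` and `A ∈ F_p^*`:
`N(A,0) = p^{m-2} - p⁻¹G_m` and `N(A,B) = p^{m-2}` for `B ≠ 0`. -/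
theorem stmt10 (p m : ℕ) [Fact p.Prime] (hodd : p ≠ 2) (hm : 2 < m) (hme : Even m)
    (hmp : p ∣ m)
    (F : Type) [Field F] [Fintype F] [DecidableEq F] [Algebra (ZMod p) F]
    (hcard : Fintype.card F = p ^ m)
    (ζ : ℂ) (hζ : IsPrimitiveRoot ζ p)
    (ηm : F → ℂ)
    (hηm : ∀ a : F, ηm a = if a = 0 then 0 else if IsSquare a then 1 else -1)
    (Gm : ℂ)
    (hGm : Gm = ∑ x ∈ Finset.univ.filter (fun x : F => x ≠ 0),
        ηm x * ζ ^ (Algebra.trace (ZMod p) F x).val)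
    (A : ZMod p) (hA : A ≠ 0) :
    (((Finset.univ.filter (fun x : F =>
        Algebra.trace (ZMod p) F (x ^ 2) = A ∧ Algebra.trace (ZMod p) F x = 0)).card : ℂ)
      = (p : ℂ) ^ (m - 2) - (p : ℂ)⁻¹ * Gm) ∧
    (∀ B : ZMod p, B ≠ 0 →
      ((Finset.univ.filter (fun x : F =>
          Algebra.trace (ZMod p) F (x ^ 2) = A ∧ Algebra.trace (ZMod p) F x = B)).card : ℂ)
        = (p : ℂ) ^ (m - 2)) := by
  set e : AddChar (ZMod p) ℂ := zmodChar p hζ.pow_eq_one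
  have he : e ≠ 1 := by
    simpa using zmodChar_primitive_of_primitive_root p hζ one_ne_zero
  have hfinrank : Module.finrank (ZMod p) F = m := by
    have h := Module.card_eq_pow_finrank (K := ZMod p) (V := F)
    rw [ZMod.card, hcard] at h
    exact Nat.pow_right_injective (Fact.out : p.Prime).two_le h.symm
  have hG :
      Gm = gaussSum ((quadraticChar F).ringHomComp (Int.castRingHom ℂ)) (e.compTrace F) := by
    rw [hGm, gaussSum, sum_filter]
    refine sum_congr rfl fun x _ ↦ ?_
    split_ifs with hx
    · simp [hηm, hx, quadraticChar_apply, quadraticCharFun, zmodChar_apply, e]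
    · simp [not_not.mp hx]
  have hcount := card_sq_mul_card_filter_trace_eq (L := F) (R := ℂ)
    (by rwa [ZMod.ringChar_zmod_n]) (by rwa [ZMod.ringChar_zmod_n, hfinrank]) (hfinrank ▸ hme)
    he hA
  simp only [ZMod.card, hcard, Nat.cast_pow, ← hG] at hcount
  have hp0 : (p : ℂ) ≠ 0 := Nat.cast_ne_zero.mpr (Fact.out : p.Prime).ne_zero
  have hpow : (p : ℂ) ^ m = p ^ 2 * p ^ (m - 2) := by rw [← pow_add]; congr; omega
  refine ⟨mul_left_cancel₀ (pow_ne_zero 2 hp0) ?_,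
    fun B hB ↦ mul_left_cancel₀ (pow_ne_zero 2 hp0) ?_⟩
  · rw [hcount, if_pos rfl, hpow]
    field_simp
  · rw [hcount, if_neg hB, hpow]
    ring
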